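/- arXiv:math/0607647 — 3 statements merged into one kernel-verified Lean document; each statement's English description precedes it below -/
import Mathlib

section
/- Let $A \in \mathbb{R}^{2\times2\times2}$ with $\Delta(A) > 0$, where $\Delta$ is Cayley's hyperdeterminant. Then $\mathrm{rank}_\otimes(A) \leq 2$. -/
set_option maxHeartbeats 1000000


/-- Tensor rank of a `2×2×2` tensor: minimal number of decomposable tensors summing to it. -/
noncomputable def tensorRank3 (A : Fin 2 → Fin 2 → Fin 2 → ℝ) : ℕ :=
  sInf { r : ℕ | ∃ (u v w : Fin r → Fin 2 → ℝ),
    ∀ i j k, A i j k = ∑ t, u t i * v t j * w t k }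

/-- Cayley's hyperdeterminant of a `2×2×2` tensor. -/
noncomputable def Delta (A : Fin 2 → Fin 2 → Fin 2 → ℝ) : ℝ :=
  (A 0 0 0 ^ 2 * A 1 1 1 ^ 2 + A 0 0 1 ^ 2 * A 1 1 0 ^ 2 +
      A 0 1 0 ^ 2 * A 1 0 1 ^ 2 + A 0 1 1 ^ 2 * A 1 0 0 ^ 2)
    - 2 * (A 0 0 0 * A 0 0 1 * A 1 1 0 * A 1 1 1 +
           A 0 0 0 * A 0 1 0 * A 1 0 1 * A 1 1 1 +
           A 0 0 0 * A 0 1 1 * A 1 0 0 * A 1 1 1 +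
           A 0 0 1 * A 0 1 0 * A 1 0 1 * A 1 1 0 +
           A 0 0 1 * A 0 1 1 * A 1 1 0 * A 1 0 0 +
           A 0 1 0 * A 0 1 1 * A 1 0 1 * A 1 0 0)
    + 4 * (A 0 0 0 * A 0 1 1 * A 1 0 1 * A 1 1 0 +
           A 0 0 1 * A 0 1 0 * A 1 0 0 * A 1 1 1)

/-- A singular 2×2 matrix is a rank-one (outer) product. -/
lemma rank1_of_det_zero (p q r s : ℝ) (h : p * s - q * r = 0) :
    ∃ u v : Fin 2 → ℝ, p = u 0 * v 0 ∧ q = u 0 * v 1 ∧ r = u 1 * v 0 ∧ s = u 1 * v 1 := by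
  by_cases hp : p = 0
  · by_cases hq : q = 0
    · exact ⟨![0, 1], ![r, s], by simp [hp, hq]⟩
    · refine ⟨![q, s], ![0, 1], by simp [hp], by simp, ?_, by simp⟩
      have : q * r = 0 := by rw [hp] at h; linarith
      simp [mul_eq_zero.mp this |>.resolve_left hq]
  · refine ⟨![p, r], ![1, q / p], by simp, by simp only [Matrix.cons_val_zero, Matrix.cons_val_one, Matrix.head_cons]; field_simp, by simp, ?_⟩
    simp only [Matrix.cons_val_zero, Matrix.cons_val_one, Matrix.head_cons, Matrix.head_fin_const]
    field_simp
    linarith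

lemma decomp_aux (A : Fin 2 → Fin 2 → Fin 2 → ℝ) (h : 0 < Delta A)
    (hc0 : A 0 0 1 * A 1 1 1 - A 0 1 1 * A 1 0 1 ≠ 0) :
    ∃ u v w : Fin 2 → Fin 2 → ℝ,
      ∀ i j k, A i j k = u 0 i * v 0 j * w 0 k + u 1 i * v 1 j * w 1 k := by
  obtain ⟨a, ha⟩ : ∃ x : ℝ, x = A 0 0 0 * A 1 1 0 - A 0 1 0 * A 1 0 0 := ⟨_, rfl⟩
  obtain ⟨c, hcdef⟩ : ∃ x : ℝ, x = A 0 0 1 * A 1 1 1 - A 0 1 1 * A 1 0 1 := ⟨_, rfl⟩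
  obtain ⟨b, hb⟩ : ∃ x : ℝ,
    x = A 0 0 0 * A 1 1 1 + A 0 0 1 * A 1 1 0 - A 0 1 0 * A 1 0 1 - A 0 1 1 * A 1 0 0 := ⟨_, rfl⟩
  have hc : c ≠ 0 := by rw [hcdef]; exact hc0
  obtain ⟨d, hddef⟩ : ∃ x : ℝ, x = Real.sqrt (Delta A) := ⟨_, rfl⟩
  have hd0 : 0 < d := hddef ▸ Real.sqrt_pos.mpr h
  have hd2 : d ^ 2 = b ^ 2 - 4 * a * c := by
    rw [hddef, Real.sq_sqrt h.le, ha, hcdef, hb]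
    simp only [Delta]
    ring
  obtain ⟨t₁, ht1⟩ : ∃ x : ℝ, x = (-b - d) / (2 * c) := ⟨_, rfl⟩
  obtain ⟨t₂, ht2⟩ : ∃ x : ℝ, x = (-b + d) / (2 * c) := ⟨_, rfl⟩
  have ht : t₂ - t₁ = d / c := by
    rw [ht1, ht2]; field_simp; ring
  obtain ⟨e, he_def⟩ : ∃ x : ℝ, x = c / d := ⟨_, rfl⟩
  have he : e * (t₂ - t₁) = 1 := by
    rw [he_def, ht]; field_simp
  have hroot1 : (A 0 0 0 + t₁ * A 0 0 1) * (A 1 1 0 + t₁ * A 1 1 1) -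
      (A 0 1 0 + t₁ * A 0 1 1) * (A 1 0 0 + t₁ * A 1 0 1) = 0 := by
    have h2 : (A 0 0 0 + t₁ * A 0 0 1) * (A 1 1 0 + t₁ * A 1 1 1) -
      (A 0 1 0 + t₁ * A 0 1 1) * (A 1 0 0 + t₁ * A 1 0 1) = a + b * t₁ + c * t₁ ^ 2 := by
      rw [ha, hb, hcdef]; ring
    rw [h2, ht1]
    field_simp
    nlinarith [hd2]
  have hroot2 : (A 0 0 0 + t₂ * A 0 0 1) * (A 1 1 0 + t₂ * A 1 1 1) -
      (A 0 1 0 + t₂ * A 0 1 1) * (A 1 0 0 + t₂ * A 1 0 1) = 0 := by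
    have h2 : (A 0 0 0 + t₂ * A 0 0 1) * (A 1 1 0 + t₂ * A 1 1 1) -
      (A 0 1 0 + t₂ * A 0 1 1) * (A 1 0 0 + t₂ * A 1 0 1) = a + b * t₂ + c * t₂ ^ 2 := by
      rw [ha, hb, hcdef]; ring
    rw [h2, ht2]
    field_simp
    nlinarith [hd2]
  obtain ⟨u₁, v₁, hp₁, hq₁, hr₁, hs₁⟩ := rank1_of_det_zero _ _ _ _ hroot1
  obtain ⟨u₂, v₂, hp₂, hq₂, hr₂, hs₂⟩ := rank1_of_det_zero _ _ _ _ hroot2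
  refine ⟨![u₁, u₂], ![v₁, v₂], ![![t₂ * e, -e], ![-(t₁ * e), e]], ?_⟩
  intro i j k
  fin_cases i <;> fin_cases j <;> fin_cases k <;>
    simp only [Fin.mk_zero, Fin.mk_one, Matrix.cons_val_zero, Matrix.cons_val_one,
      Matrix.head_cons, Fin.isValue]
  · linear_combination -(A 0 0 0) * he + t₂ * e * hp₁ - t₁ * e * hp₂
  · linear_combination -(A 0 0 1) * he - e * hp₁ + e * hp₂
  · linear_combination -(A 0 1 0) * he + t₂ * e * hq₁ - t₁ * e * hq₂
  · linear_combination -(A 0 1 1) * he - e * hq₁ + e * hq₂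
  · linear_combination -(A 1 0 0) * he + t₂ * e * hr₁ - t₁ * e * hr₂
  · linear_combination -(A 1 0 1) * he - e * hr₁ + e * hr₂
  · linear_combination -(A 1 1 0) * he + t₂ * e * hs₁ - t₁ * e * hs₂
  · linear_combination -(A 1 1 1) * he - e * hs₁ + e * hs₂

/-- If `Δ(A) > 0` then `A` has tensor rank at most 2. -/
theorem rank_le_two_of_Delta_pos (A : Fin 2 → Fin 2 → Fin 2 → ℝ) (h : 0 < Delta A) :
    tensorRank3 A ≤ 2 := by
  have key : ∃ u v w : Fin 2 → Fin 2 → ℝ,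
      ∀ i j k, A i j k = u 0 i * v 0 j * w 0 k + u 1 i * v 1 j * w 1 k := by
    by_cases hc : A 0 0 1 * A 1 1 1 - A 0 1 1 * A 1 0 1 ≠ 0
    · exact decomp_aux A h hc
    · push_neg at hc
      by_cases haz : A 0 0 0 * A 1 1 0 - A 0 1 0 * A 1 0 0 ≠ 0
      · -- swap the third index
        set A' : Fin 2 → Fin 2 → Fin 2 → ℝ := fun i j k => A i j (k + 1) with hA'
        have h0 : ∀ i j, A' i j 0 = A i j 1 := fun i j => rfl
        have h1 : ∀ i j, A' i j 1 = A i j 0 := fun i j => rfl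
        have hD : Delta A' = Delta A := by
          simp only [Delta, h0, h1]; ring
        have hc' : A' 0 0 1 * A' 1 1 1 - A' 0 1 1 * A' 1 0 1 ≠ 0 := by
          rw [h1, h1, h1, h1]; exact haz
        obtain ⟨u, v, w, hw⟩ := decomp_aux A' (hD ▸ h) hc'
        refine ⟨u, v, fun t k => w t (k + 1), ?_⟩
        intro i j k
        have hk : k + 1 + 1 = k := by fin_cases k <;> rfl
        have := hw i j (k + 1)
        simp only [hA', hk] at this
        exact this
      · push_neg at haz
        obtain ⟨u₁, v₁, hp₁, hq₁, hr₁, hs₁⟩ := rank1_of_det_zero _ _ _ _ haz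
        obtain ⟨u₂, v₂, hp₂, hq₂, hr₂, hs₂⟩ := rank1_of_det_zero _ _ _ _ hc
        refine ⟨![u₁, u₂], ![v₁, v₂], ![![1, 0], ![0, 1]], ?_⟩
        intro i j k
        fin_cases i <;> fin_cases j <;> fin_cases k <;>
          simp only [Fin.mk_zero, Fin.mk_one, Matrix.cons_val_zero, Matrix.cons_val_one,
            Matrix.head_cons, Fin.isValue] <;>
          [linear_combination hp₁; linear_combination hp₂; linear_combination hq₁;
            linear_combination hq₂; linear_combination hr₁; linear_combination hr₂;
            linear_combination hs₁; linear_combination hs₂]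
  obtain ⟨u, v, w, hw⟩ := key
  apply Nat.sInf_le
  refine ⟨u, v, w, fun i j k => ?_⟩
  rw [Fin.sum_univ_two]; exact hw i j k
end

section
/- Let $A \in \mathbb{R}^{2\times2\times2}$ with $\mathrm{rank}_\otimes(A) \leq 2$. Then $\Delta(A) \geq 0$, where $\Delta$ is Cayley's hyperdeterminant. -/
/-- Key identity: the hyperdeterminant of a rank-≤2 tensor is the square of the
product of the three `2×2` determinants. -/
lemma Delta_of_rank_two (u v w : Fin 2 → Fin 2 → ℝ)
    (A : Fin 2 → Fin 2 → Fin 2 → ℝ)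
    (hA : ∀ i j k, A i j k = u 0 i * v 0 j * w 0 k + u 1 i * v 1 j * w 1 k) :
    Delta A = ((u 0 0 * u 1 1 - u 0 1 * u 1 0) * (v 0 0 * v 1 1 - v 0 1 * v 1 0) *
      (w 0 0 * w 1 1 - w 0 1 * w 1 0)) ^ 2 := by
  simp only [Delta, hA]
  ring

/-- Every `2×2×2` tensor admits some decomposition (with 8 terms). -/
lemma decomp_exists (A : Fin 2 → Fin 2 → Fin 2 → ℝ) :
    (8 : ℕ) ∈ { r : ℕ | ∃ (u v w : Fin r → Fin 2 → ℝ),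
      ∀ i j k, A i j k = ∑ t, u t i * v t j * w t k } := by
  refine ⟨fun t i => if t.val / 4 = i.val then (1:ℝ) else 0,
    fun t j => if t.val / 2 % 2 = j.val then (1:ℝ) else 0,
    fun t k => if t.val % 2 = k.val then
      A ⟨t.val / 4, by omega⟩ ⟨t.val / 2 % 2, by omega⟩ ⟨t.val % 2, by omega⟩ else 0, ?_⟩
  intro i j k
  fin_cases i <;> fin_cases j <;> fin_cases k <;>
    norm_num [Fin.sum_univ_eight, Fin.ext_iff,
      show ((3:Fin 8):ℕ) = 3 from rfl, show ((4:Fin 8):ℕ) = 4 from rfl,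
      show ((5:Fin 8):ℕ) = 5 from rfl, show ((6:Fin 8):ℕ) = 6 from rfl,
      show ((7:Fin 8):ℕ) = 7 from rfl]

/-- If `A` has tensor rank at most 2 then `Δ(A) ≥ 0`. -/
theorem Delta_nonneg_of_rank_le_two (A : Fin 2 → Fin 2 → Fin 2 → ℝ)
    (h : tensorRank3 A ≤ 2) : 0 ≤ Delta A := by
  have hmem := Nat.sInf_mem ⟨8, decomp_exists A⟩
  have hex : ∃ n, n ≤ 2 ∧ ∃ (u v w : Fin n → Fin 2 → ℝ),
      ∀ i j k, A i j k = ∑ t, u t i * v t j * w t k := ⟨tensorRank3 A, h, hmem⟩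
  obtain ⟨n, hn, u, v, w, hA⟩ := hex
  interval_cases n
  · -- rank 0
    have := Delta_of_rank_two (fun _ _ => 0) (fun _ _ => 0) (fun _ _ => 0) A
      (by intro i j k; simpa using hA i j k)
    rw [this]; positivity
  · -- rank 1
    have := Delta_of_rank_two ![u 0, fun _ => 0] ![v 0, fun _ => 0] ![w 0, fun _ => 0] A
      (by intro i j k; simpa [Fin.sum_univ_one] using hA i j k)
    rw [this]; positivity
  · -- rank 2
    have := Delta_of_rank_two u v w A
      (by intro i j k; simpa [Fin.sum_univ_two] using hA i j k)
    rw [this]; positivity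
end

section
/- No tensor $A \in \mathbb{R}^{2\times2\times2}$ of tensor rank 3 has a best rank-2 approximation in the Frobenius norm. That is, if $\mathrm{rank}_\otimes(A) = 3$, then the infimum $\inf\{\|A - B\|_F \mid \mathrm{rank}_{\otimes}(B) \leq 2\}$ is not attained. -/
/-- Frobenius norm of a `2×2×2` tensor. -/
noncomputable def frobNorm3 (A : Fin 2 → Fin 2 → Fin 2 → ℝ) : ℝ :=
  Real.sqrt (∑ i, ∑ j, ∑ k, (A i j k) ^ 2)

namespace NoBest

abbrev Tens := Fin 2 → Fin 2 → Fin 2 → ℝ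

lemma fin2cases (i : Fin 2) : i = 0 ∨ i = 1 := by omega

lemma decompSet_nonempty (A : Tens) :
    { r : ℕ | ∃ (u v w : Fin r → Fin 2 → ℝ),
      ∀ i j k, A i j k = ∑ t, u t i * v t j * w t k }.Nonempty := by
  refine ⟨4, ![fun i => A i 0 0, fun i => A i 0 1, fun i => A i 1 0, fun i => A i 1 1],
    ![![1,0],![1,0],![0,1],![0,1]], ![![1,0],![0,1],![1,0],![0,1]], ?_⟩
  intro i j k
  rcases fin2cases j with rfl | rfl <;> rcases fin2cases k with rfl | rfl <;>
    simp [Fin.sum_univ_four, Matrix.vecHead, Matrix.vecTail]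

lemma rank_le_two_of_decomp (C : Tens) (a1 b1 c1 a2 b2 c2 : Fin 2 → ℝ)
    (h : ∀ i j k, C i j k = a1 i * b1 j * c1 k + a2 i * b2 j * c2 k) :
    tensorRank3 C ≤ 2 := by
  apply Nat.sInf_le
  refine ⟨![a1, a2], ![b1, b2], ![c1, c2], ?_⟩
  intro i j k
  rw [h i j k]
  simp [Fin.sum_univ_two]

lemma decomp_of_rank_le_two (B : Tens) (h2 : tensorRank3 B ≤ 2) :
    ∃ a1 b1 c1 a2 b2 c2 : Fin 2 → ℝ,
      ∀ i j k, B i j k = a1 i * b1 j * c1 k + a2 i * b2 j * c2 k := by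
  have hmem : ∃ u v w : Fin (tensorRank3 B) → Fin 2 → ℝ,
      ∀ i j k, B i j k = ∑ t, u t i * v t j * w t k :=
    Nat.sInf_mem (decompSet_nonempty B)
  obtain ⟨n, hn2, u, v, w, hd⟩ : ∃ n ≤ 2, ∃ u v w : Fin n → Fin 2 → ℝ,
      ∀ i j k, B i j k = ∑ t, u t i * v t j * w t k := ⟨_, h2, hmem⟩
  interval_cases n
  · exact ⟨0, 0, 0, 0, 0, 0, by intro i j k; rw [hd i j k]; simp⟩
  · exact ⟨u 0, v 0, w 0, 0, 0, 0, by intro i j k; rw [hd i j k]; simp [Fin.sum_univ_one]⟩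
  · exact ⟨u 0, v 0, w 0, u 1, v 1, w 1, by intro i j k; rw [hd i j k]; simp [Fin.sum_univ_two]⟩

lemma frob_nonneg (F : Tens) : 0 ≤ frobNorm3 F := Real.sqrt_nonneg _

lemma frob_scale (c : ℝ) (F : Tens) :
    frobNorm3 (fun i j k => c * F i j k) = |c| * frobNorm3 F := by
  unfold frobNorm3
  rw [show (∑ i, ∑ j, ∑ k, (c * F i j k) ^ 2) = c ^ 2 * ∑ i, ∑ j, ∑ k, (F i j k) ^ 2 by
    simp [Fin.sum_univ_two]; ring]
  rw [Real.sqrt_mul (sq_nonneg c), Real.sqrt_sq_eq_abs]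

lemma frob_pos_of_ne (A B : Tens) (h : A ≠ B) :
    0 < frobNorm3 (fun i j k => A i j k - B i j k) := by
  by_contra hc
  push_neg at hc
  have h0 : frobNorm3 (fun i j k => A i j k - B i j k) = 0 :=
    le_antisymm hc (frob_nonneg _)
  unfold frobNorm3 at h0
  have hnn : (0:ℝ) ≤ ∑ i, ∑ j, ∑ k, ((fun i j k => A i j k - B i j k) i j k) ^ 2 := by
    positivity
  have hs : (∑ i, ∑ j, ∑ k, ((fun i j k => A i j k - B i j k) i j k) ^ 2) = 0 := by
    rw [← Real.sq_sqrt hnn, h0]; norm_num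
  apply h
  funext i j k
  have hi := (Finset.sum_eq_zero_iff_of_nonneg (fun x _ => by positivity)).mp hs i
    (Finset.mem_univ i)
  have hj := (Finset.sum_eq_zero_iff_of_nonneg (fun x _ => by positivity)).mp hi j
    (Finset.mem_univ j)
  have hk := (Finset.sum_eq_zero_iff_of_nonneg (fun x _ => by positivity)).mp hj k
    (Finset.mem_univ k)
  have hk' : (A i j k - B i j k) ^ 2 = 0 := hk
  have := pow_eq_zero_iff (n := 2) (by norm_num) |>.mp hk'
  linarith

lemma inner_eq_zero (D X : Tens)
    (h : ∀ t : ℝ, frobNorm3 D ≤ frobNorm3 (fun i j k => D i j k - t * X i j k)) :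
    ∑ i, ∑ j, ∑ k, D i j k * X i j k = 0 := by
  have key : ∀ t : ℝ,
      0 ≤ t ^ 2 * (∑ i, ∑ j, ∑ k, (X i j k) ^ 2)
        - 2 * t * (∑ i, ∑ j, ∑ k, D i j k * X i j k) := by
    intro t
    have h1 := h t
    unfold frobNorm3 at h1
    have hD0 : (0:ℝ) ≤ ∑ i, ∑ j, ∑ k, (D i j k) ^ 2 := by positivity
    have hE0 : (0:ℝ) ≤ ∑ i, ∑ j, ∑ k, ((fun i j k => D i j k - t * X i j k) i j k) ^ 2 := by
      positivity
    have h2 : (∑ i, ∑ j, ∑ k, (D i j k) ^ 2)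
        ≤ ∑ i, ∑ j, ∑ k, ((fun i j k => D i j k - t * X i j k) i j k) ^ 2 := by
      nlinarith [Real.sq_sqrt hD0, Real.sq_sqrt hE0, Real.sqrt_nonneg
        (∑ i, ∑ j, ∑ k, (D i j k) ^ 2), Real.sqrt_nonneg
        (∑ i, ∑ j, ∑ k, ((fun i j k => D i j k - t * X i j k) i j k) ^ 2), h1]
    have h3 : (∑ i, ∑ j, ∑ k, ((fun i j k => D i j k - t * X i j k) i j k) ^ 2)
        = (∑ i, ∑ j, ∑ k, (D i j k) ^ 2)
          - 2 * t * (∑ i, ∑ j, ∑ k, D i j k * X i j k)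
          + t ^ 2 * (∑ i, ∑ j, ∑ k, (X i j k) ^ 2) := by
      simp only [Fin.sum_univ_two]; ring
    linarith
  set c := ∑ i, ∑ j, ∑ k, D i j k * X i j k with hc
  set s := ∑ i, ∑ j, ∑ k, (X i j k) ^ 2 with hsd
  have hs : (0:ℝ) ≤ s := by rw [hsd]; positivity
  have hcsq : c ^ 2 ≤ 0 := by
    rcases hs.eq_or_lt with hs0 | hs0
    · nlinarith [key c]
    · have h5 := mul_nonneg (key (c / s)) hs0.le
      have h6 : ((c / s) ^ 2 * s - 2 * (c / s) * c) * s = -(c ^ 2) := by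
        field_simp
        ring
      rw [h6] at h5
      linarith
  have : c ^ 2 = 0 := le_antisymm hcsq (sq_nonneg c)
  exact pow_eq_zero_iff (n := 2) (by norm_num) |>.mp this

lemma rank1_fac (m : Fin 2 → Fin 2 → ℝ) (h : m 0 0 * m 1 1 - m 0 1 * m 1 0 = 0) :
    ∃ a b : Fin 2 → ℝ, ∀ i j, m i j = a i * b j := by
  by_cases h00 : m 0 0 = 0
  · by_cases h01 : m 0 1 = 0
    · refine ⟨![0, 1], ![m 1 0, m 1 1], ?_⟩
      intro i j
      rcases fin2cases i with rfl | rfl <;> rcases fin2cases j with rfl | rfl <;>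
        simp [h00, h01]
    · have h10 : m 1 0 = 0 := by
        have hm : m 0 1 * m 1 0 = 0 := by rw [h00] at h; linarith
        rcases mul_eq_zero.mp hm with h' | h'
        · exact absurd h' h01
        · exact h'
      refine ⟨![m 0 1, m 1 1], ![0, 1], ?_⟩
      intro i j
      rcases fin2cases i with rfl | rfl <;> rcases fin2cases j with rfl | rfl <;>
        simp [h00, h10]
  · refine ⟨![m 0 0, m 1 0], ![1, m 0 1 / m 0 0], ?_⟩
    intro i j
    rcases fin2cases i with rfl | rfl <;> rcases fin2cases j with rfl | rfl
    · simp
    · simp only [Matrix.cons_val_zero, Matrix.cons_val_one, Matrix.head_cons]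
      field_simp
    · simp
    · simp only [Matrix.cons_val_one, Matrix.head_cons, Matrix.cons_val_zero]
      field_simp
      linear_combination h

lemma two_eqs (x y d m0 m1 : ℝ) (hd : d ≠ 0) (hm : m0 ^ 2 + m1 ^ 2 ≠ 0)
    (h0 : x * (d * m1) + y * (-(d * m0)) = 0)
    (h1 : x * (d * m1 + m0) + y * (-(d * m0) + m1) = 0) : x = 0 ∧ y = 0 := by
  have hA1 : x * m1 - y * m0 = 0 := by
    have h0' : d * (x * m1 - y * m0) = 0 := by linear_combination h0
    exact (mul_eq_zero.mp h0').resolve_left hd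
  have hA2 : x * m0 + y * m1 = 0 := by linear_combination h1 - h0
  constructor
  · have hx : x * (m0 ^ 2 + m1 ^ 2) = 0 := by linear_combination m1 * hA1 + m0 * hA2
    exact (mul_eq_zero.mp hx).resolve_right hm
  · have hy : y * (m0 ^ 2 + m1 ^ 2) = 0 := by linear_combination m1 * hA2 - m0 * hA1
    exact (mul_eq_zero.mp hy).resolve_right hm

end NoBest
noncomputable section
namespace NoBest

def disc (C : Tens) : ℝ :=
  (C 0 0 0 * C 1 1 1 + C 1 1 0 * C 0 0 1 - C 0 1 0 * C 1 0 1 - C 1 0 0 * C 0 1 1) ^ 2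
    - 4 * (C 0 0 0 * C 1 1 0 - C 0 1 0 * C 1 0 0) * (C 0 0 1 * C 1 1 1 - C 0 1 1 * C 1 0 1)

lemma rank_le_two_of_disc_pos (C : Tens) (h : 0 < disc C) : tensorRank3 C ≤ 2 := by
  unfold disc at h
  set al := C 0 0 0 * C 1 1 0 - C 0 1 0 * C 1 0 0 with hal
  set be := C 0 0 1 * C 1 1 1 - C 0 1 1 * C 1 0 1 with hbe
  set ga := C 0 0 0 * C 1 1 1 + C 1 1 0 * C 0 0 1 - C 0 1 0 * C 1 0 1 - C 1 0 0 * C 0 1 1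
    with hga2
  by_cases hA0 : al = 0
  · have hgn : ga ≠ 0 := by
      intro h0
      rw [hA0, h0] at h
      norm_num at h
    obtain ⟨a1, b1, hN1⟩ := rank1_fac (fun i j => C i j 0)
      (by show C 0 0 0 * C 1 1 0 - C 0 1 0 * C 1 0 0 = 0; rw [← hal]; exact hA0)
    obtain ⟨a2, b2, hN2⟩ := rank1_fac (fun i j => -be * C i j 0 + ga * C i j 1)
      (by
        show (-be * C 0 0 0 + ga * C 0 0 1) * (-be * C 1 1 0 + ga * C 1 1 1)
          - (-be * C 0 1 0 + ga * C 0 1 1) * (-be * C 1 0 0 + ga * C 1 0 1) = 0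
        linear_combination (-(be ^ 2)) * hal + (be * ga) * hga2 + (-(ga ^ 2)) * hbe
          + (be ^ 2) * hA0)
    apply rank_le_two_of_decomp C a1 b1 ![1, be / ga] a2 b2 ![0, 1 / ga]
    intro i j k
    have e1 : C i j 0 = a1 i * b1 j := hN1 i j
    have e2 : -be * C i j 0 + ga * C i j 1 = a2 i * b2 j := hN2 i j
    rcases fin2cases k with rfl | rfl <;>
      simp only [Matrix.cons_val_zero, Matrix.cons_val_one, Matrix.head_cons]
    · rw [← e1]; ring
    · rw [← e1, ← e2]; field_simp; ring
  · have hdle : (0:ℝ) ≤ ga ^ 2 - 4 * al * be := le_of_lt h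
    set s := Real.sqrt (ga ^ 2 - 4 * al * be) with hsdef
    have hs2 : s ^ 2 = ga ^ 2 - 4 * al * be := Real.sq_sqrt hdle
    have hs0 : 0 < s := Real.sqrt_pos.mpr h
    obtain ⟨a1, b1, hN1⟩ := rank1_fac (fun i j => (-ga + s) * C i j 0 + 2 * al * C i j 1)
      (by
        show ((-ga + s) * C 0 0 0 + 2 * al * C 0 0 1) * ((-ga + s) * C 1 1 0 + 2 * al * C 1 1 1)
          - ((-ga + s) * C 0 1 0 + 2 * al * C 0 1 1) * ((-ga + s) * C 1 0 0 + 2 * al * C 1 0 1)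
            = 0
        linear_combination (-((-ga + s) ^ 2)) * hal + (-((-ga + s) * (2 * al))) * hga2
          + (-((2 * al) ^ 2)) * hbe + al * hs2)
    obtain ⟨a2, b2, hN2⟩ := rank1_fac (fun i j => (-ga - s) * C i j 0 + 2 * al * C i j 1)
      (by
        show ((-ga - s) * C 0 0 0 + 2 * al * C 0 0 1) * ((-ga - s) * C 1 1 0 + 2 * al * C 1 1 1)
          - ((-ga - s) * C 0 1 0 + 2 * al * C 0 1 1) * ((-ga - s) * C 1 0 0 + 2 * al * C 1 0 1)
            = 0
        linear_combination (-((-ga - s) ^ 2)) * hal + (-((-ga - s) * (2 * al))) * hga2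
          + (-((2 * al) ^ 2)) * hbe + al * hs2)
    apply rank_le_two_of_decomp C a1 b1 ![1 / (2 * s), (ga + s) / (4 * s * al)]
      a2 b2 ![-(1 / (2 * s)), (-ga + s) / (4 * s * al)]
    intro i j k
    have e1 : (-ga + s) * C i j 0 + 2 * al * C i j 1 = a1 i * b1 j := hN1 i j
    have e2 : (-ga - s) * C i j 0 + 2 * al * C i j 1 = a2 i * b2 j := hN2 i j
    rcases fin2cases k with rfl | rfl <;>
      simp only [Matrix.cons_val_zero, Matrix.cons_val_one, Matrix.head_cons]
    · rw [← e1, ← e2]; field_simp; ring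
    · rw [← e1, ← e2]; field_simp; ring

end NoBest
end
namespace NoBest

lemma rank_swap23 (A : Tens) : tensorRank3 (fun i j k => A i k j) = tensorRank3 A := by
  unfold tensorRank3
  congr 1
  ext r
  simp only [Set.mem_setOf_eq]
  constructor
  · rintro ⟨u, v, w, hh⟩
    exact ⟨u, w, v, fun i j k => (hh i k j).trans (Finset.sum_congr rfl fun t _ => by ring)⟩
  · rintro ⟨u, v, w, hh⟩
    exact ⟨u, w, v, fun i j k => (hh i k j).trans (Finset.sum_congr rfl fun t _ => by ring)⟩

lemma rank_swap13 (A : Tens) : tensorRank3 (fun i j k => A k j i) = tensorRank3 A := by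
  unfold tensorRank3
  congr 1
  ext r
  simp only [Set.mem_setOf_eq]
  constructor
  · rintro ⟨u, v, w, hh⟩
    exact ⟨w, v, u, fun i j k => (hh k j i).trans (Finset.sum_congr rfl fun t _ => by ring)⟩
  · rintro ⟨u, v, w, hh⟩
    exact ⟨w, v, u, fun i j k => (hh k j i).trans (Finset.sum_congr rfl fun t _ => by ring)⟩

lemma frob_swap23 (F : Tens) : frobNorm3 (fun i j k => F i k j) = frobNorm3 F := by
  unfold frobNorm3
  congr 1
  simp only [Fin.sum_univ_two]
  ring

lemma frob_swap13 (F : Tens) : frobNorm3 (fun i j k => F k j i) = frobNorm3 F := by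
  unfold frobNorm3
  congr 1
  simp only [Fin.sum_univ_two]
  ring

lemma case_generic (A B : Tens)
    (hbest : ∀ C : Tens, tensorRank3 C ≤ 2 →
      frobNorm3 (fun i j k => A i j k - B i j k) ≤ frobNorm3 (fun i j k => A i j k - C i j k))
    (hne : A ≠ B) (hpos : 0 < disc B) : False := by
  have hcont : Continuous
      (fun t : ℝ => disc (fun i j k => B i j k + t * (A i j k - B i j k))) := by
    simp only [disc]
    fun_prop
  have hf0 : disc (fun i j k => B i j k + (0:ℝ) * (A i j k - B i j k)) = disc B := by
    simp [disc]
  have hev : ∀ᶠ t in nhds (0:ℝ),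
      0 < disc (fun i j k => B i j k + t * (A i j k - B i j k)) :=
    (hcont.continuousAt (x := 0)).eventually (eventually_gt_nhds (by
      show (0:ℝ) < disc (fun i j k => B i j k + (0:ℝ) * (A i j k - B i j k))
      rw [hf0]; exact hpos))
  rw [Metric.eventually_nhds_iff] at hev
  obtain ⟨ε, hε, hball⟩ := hev
  have ht0 : (0:ℝ) < min (ε / 2) (1 / 2) := by positivity
  have ht1 : min (ε / 2) (1 / 2) < 1 := lt_of_le_of_lt (min_le_right _ _) (by norm_num)
  have htd : dist (min (ε / 2) (1 / 2)) (0:ℝ) < ε := by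
    rw [Real.dist_eq, sub_zero, abs_of_pos ht0]
    exact lt_of_le_of_lt (min_le_left _ _) (by linarith)
  have hft := hball htd
  have hrank := rank_le_two_of_disc_pos _ hft
  have hle := hbest _ hrank
  have heq : (fun i j k => A i j k
        - (B i j k + min (ε / 2) (1 / 2) * (A i j k - B i j k)))
      = fun i j k => (1 - min (ε / 2) (1 / 2)) * (A i j k - B i j k) := by
    funext i j k; ring
  rw [heq] at hle
  have hsc : frobNorm3 (fun i j k => (1 - min (ε / 2) (1 / 2)) * (A i j k - B i j k))
      = |1 - min (ε / 2) (1 / 2)| * frobNorm3 (fun i j k => A i j k - B i j k) :=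
    frob_scale _ _
  rw [hsc, abs_of_pos (by linarith)] at hle
  have hDpos := frob_pos_of_ne A B hne
  nlinarith

lemma degenerate_case (A B : Tens)
    (hbest : ∀ C : Tens, tensorRank3 C ≤ 2 →
      frobNorm3 (fun i j k => A i j k - B i j k) ≤ frobNorm3 (fun i j k => A i j k - C i j k))
    (M : Fin 2 → Fin 2 → ℝ) (w : Fin 2 → ℝ)
    (hB : ∀ i j k, B i j k = M i j * w k) : A = B := by
  by_cases hdet : M 0 0 * M 1 1 - M 0 1 * M 1 0 = 0
  · obtain ⟨p, q, hpq⟩ := rank1_fac M hdet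
    have key : ∀ a b z : Fin 2 → ℝ,
        ∑ i, ∑ j, ∑ k, (A i j k - B i j k) * (a i * b j * z k) = 0 := by
      intro a b z
      apply inner_eq_zero (fun i j k => A i j k - B i j k) (fun i j k => a i * b j * z k)
      intro t
      have hC : tensorRank3 (fun i j k => B i j k + t * (a i * b j * z k)) ≤ 2 := by
        apply rank_le_two_of_decomp _ p q w a b (fun k => t * z k)
        intro i j k
        rw [hB i j k]
        linear_combination (w k) * (hpq i j)
      have h2 := hbest _ hC
      have heq : (fun i j k => A i j k - (B i j k + t * (a i * b j * z k)))
          = fun i j k => (A i j k - B i j k) - t * (a i * b j * z k) := by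
        funext i j k; ring
      rw [heq] at h2
      exact h2
    funext i j k
    have hkey := key (Pi.single i 1) (Pi.single j 1) (Pi.single k 1)
    have : A i j k - B i j k = 0 := by
      rcases fin2cases i with rfl | rfl <;> rcases fin2cases j with rfl | rfl <;>
        rcases fin2cases k with rfl | rfl <;>
        · simp only [Fin.sum_univ_two, Pi.single_apply] at hkey
          norm_num at hkey
          linarith [hkey]
    linarith
  · have slice : ∀ a0 a1 b0 b1 z0 z1 : ℝ,
        (M 0 0 - a0 * b0) * (M 1 1 - a1 * b1) - (M 0 1 - a0 * b1) * (M 1 0 - a1 * b0) = 0 →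
        (A 0 0 0 - B 0 0 0) * (a0 * b0 * z0) + (A 0 0 1 - B 0 0 1) * (a0 * b0 * z1)
        + (A 0 1 0 - B 0 1 0) * (a0 * b1 * z0) + (A 0 1 1 - B 0 1 1) * (a0 * b1 * z1)
        + (A 1 0 0 - B 1 0 0) * (a1 * b0 * z0) + (A 1 0 1 - B 1 0 1) * (a1 * b0 * z1)
        + (A 1 1 0 - B 1 1 0) * (a1 * b1 * z0) + (A 1 1 1 - B 1 1 1) * (a1 * b1 * z1) = 0 := by
      intro a0 a1 b0 b1 z0 z1 hcond
      obtain ⟨p, q, hpq⟩ := rank1_fac (fun i j => M i j - ![a0, a1] i * ![b0, b1] j)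
        (by
          show (M 0 0 - ![a0,a1] 0 * ![b0,b1] 0) * (M 1 1 - ![a0,a1] 1 * ![b0,b1] 1)
            - (M 0 1 - ![a0,a1] 0 * ![b0,b1] 1) * (M 1 0 - ![a0,a1] 1 * ![b0,b1] 0) = 0
          simpa using hcond)
      have e := inner_eq_zero (fun i j k => A i j k - B i j k)
        (fun i j k => ![a0,a1] i * ![b0,b1] j * ![z0,z1] k) ?_
      · simp only [Fin.sum_univ_two, Matrix.cons_val_zero, Matrix.cons_val_one,
          Matrix.head_cons] at e
        linear_combination e
      · intro t
        have hC : tensorRank3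
            (fun i j k => B i j k + t * (![a0,a1] i * ![b0,b1] j * ![z0,z1] k)) ≤ 2 := by
          apply rank_le_two_of_decomp _ p q w ![a0,a1] ![b0,b1]
            (fun k => w k + t * ![z0,z1] k)
          intro i j k
          rw [hB i j k]
          have hpq' : M i j - ![a0,a1] i * ![b0,b1] j = p i * q j := hpq i j
          linear_combination (w k) * hpq'
        have h2 := hbest _ hC
        have heq : (fun i j k => A i j k
              - (B i j k + t * (![a0,a1] i * ![b0,b1] j * ![z0,z1] k)))
            = fun i j k => (A i j k - B i j k)
              - t * (![a0,a1] i * ![b0,b1] j * ![z0,z1] k) := by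
          funext i j k; ring
        rw [heq] at h2
        exact h2
    have hSA : M 1 0 ^ 2 + M 1 1 ^ 2 ≠ 0 := by
      intro h0
      have h10 : M 1 0 = 0 := by nlinarith [sq_nonneg (M 1 0), sq_nonneg (M 1 1)]
      have h11 : M 1 1 = 0 := by nlinarith [sq_nonneg (M 1 0), sq_nonneg (M 1 1)]
      apply hdet; rw [h10, h11]; ring
    have hSB : M 0 1 ^ 2 + M 0 0 ^ 2 ≠ 0 := by
      intro h0
      have h00 : M 0 0 = 0 := by nlinarith [sq_nonneg (M 0 0), sq_nonneg (M 0 1)]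
      have h01 : M 0 1 = 0 := by nlinarith [sq_nonneg (M 0 0), sq_nonneg (M 0 1)]
      apply hdet; rw [h00, h01]; ring
    have row0 : ∀ τ z0 z1 : ℝ,
        (A 0 0 0 - B 0 0 0) * (((M 0 0 * M 1 1 - M 0 1 * M 1 0) * M 1 1 + τ * M 1 0) * z0)
        + (A 0 0 1 - B 0 0 1) * (((M 0 0 * M 1 1 - M 0 1 * M 1 0) * M 1 1 + τ * M 1 0) * z1)
        + (A 0 1 0 - B 0 1 0) * ((-((M 0 0 * M 1 1 - M 0 1 * M 1 0) * M 1 0) + τ * M 1 1) * z0)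
        + (A 0 1 1 - B 0 1 1) * ((-((M 0 0 * M 1 1 - M 0 1 * M 1 0) * M 1 0) + τ * M 1 1) * z1)
          = 0 := by
      intro τ z0 z1
      have hcond : (M 0 0 - (1/(M 1 0 ^ 2 + M 1 1 ^ 2))
            * ((M 0 0 * M 1 1 - M 0 1 * M 1 0) * M 1 1 + τ * M 1 0))
          * (M 1 1 - 0 * (-((M 0 0 * M 1 1 - M 0 1 * M 1 0) * M 1 0) + τ * M 1 1))
          - (M 0 1 - (1/(M 1 0 ^ 2 + M 1 1 ^ 2))
            * (-((M 0 0 * M 1 1 - M 0 1 * M 1 0) * M 1 0) + τ * M 1 1))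
          * (M 1 0 - 0 * ((M 0 0 * M 1 1 - M 0 1 * M 1 0) * M 1 1 + τ * M 1 0)) = 0 := by
        field_simp
        ring
      have e := slice (1/(M 1 0 ^ 2 + M 1 1 ^ 2)) 0
        ((M 0 0 * M 1 1 - M 0 1 * M 1 0) * M 1 1 + τ * M 1 0)
        (-((M 0 0 * M 1 1 - M 0 1 * M 1 0) * M 1 0) + τ * M 1 1) z0 z1 hcond
      field_simp [hSA] at e
      linear_combination e
    have row1 : ∀ τ z0 z1 : ℝ,
        (A 1 0 0 - B 1 0 0) * ((-((M 0 0 * M 1 1 - M 0 1 * M 1 0) * M 0 1) + τ * M 0 0) * z0)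
        + (A 1 0 1 - B 1 0 1) * ((-((M 0 0 * M 1 1 - M 0 1 * M 1 0) * M 0 1) + τ * M 0 0) * z1)
        + (A 1 1 0 - B 1 1 0) * (((M 0 0 * M 1 1 - M 0 1 * M 1 0) * M 0 0 + τ * M 0 1) * z0)
        + (A 1 1 1 - B 1 1 1) * (((M 0 0 * M 1 1 - M 0 1 * M 1 0) * M 0 0 + τ * M 0 1) * z1)
          = 0 := by
      intro τ z0 z1
      have hcond : (M 0 0 - 0 * (-((M 0 0 * M 1 1 - M 0 1 * M 1 0) * M 0 1) + τ * M 0 0))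
          * (M 1 1 - (1/(M 0 1 ^ 2 + M 0 0 ^ 2))
            * ((M 0 0 * M 1 1 - M 0 1 * M 1 0) * M 0 0 + τ * M 0 1))
          - (M 0 1 - 0 * ((M 0 0 * M 1 1 - M 0 1 * M 1 0) * M 0 0 + τ * M 0 1))
          * (M 1 0 - (1/(M 0 1 ^ 2 + M 0 0 ^ 2))
            * (-((M 0 0 * M 1 1 - M 0 1 * M 1 0) * M 0 1) + τ * M 0 0)) = 0 := by
        field_simp
        ring
      have e := slice 0 (1/(M 0 1 ^ 2 + M 0 0 ^ 2))
        (-((M 0 0 * M 1 1 - M 0 1 * M 1 0) * M 0 1) + τ * M 0 0)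
        ((M 0 0 * M 1 1 - M 0 1 * M 1 0) * M 0 0 + τ * M 0 1) z0 z1 hcond
      field_simp [hSB] at e
      linear_combination e
    have E00 : (A 0 0 0 - B 0 0 0) * ((M 0 0 * M 1 1 - M 0 1 * M 1 0) * M 1 1)
        + (A 0 1 0 - B 0 1 0) * (-((M 0 0 * M 1 1 - M 0 1 * M 1 0) * M 1 0)) = 0 := by
      linear_combination row0 0 1 0
    have E01 : (A 0 0 0 - B 0 0 0) * ((M 0 0 * M 1 1 - M 0 1 * M 1 0) * M 1 1 + M 1 0)
        + (A 0 1 0 - B 0 1 0) * (-((M 0 0 * M 1 1 - M 0 1 * M 1 0) * M 1 0) + M 1 1) = 0 := by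
      linear_combination row0 1 1 0
    obtain ⟨h000, h010⟩ := two_eqs _ _ _ _ _ hdet hSA E00 E01
    have E10 : (A 0 0 1 - B 0 0 1) * ((M 0 0 * M 1 1 - M 0 1 * M 1 0) * M 1 1)
        + (A 0 1 1 - B 0 1 1) * (-((M 0 0 * M 1 1 - M 0 1 * M 1 0) * M 1 0)) = 0 := by
      linear_combination row0 0 0 1
    have E11 : (A 0 0 1 - B 0 0 1) * ((M 0 0 * M 1 1 - M 0 1 * M 1 0) * M 1 1 + M 1 0)
        + (A 0 1 1 - B 0 1 1) * (-((M 0 0 * M 1 1 - M 0 1 * M 1 0) * M 1 0) + M 1 1) = 0 := by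
      linear_combination row0 1 0 1
    obtain ⟨h001, h011⟩ := two_eqs _ _ _ _ _ hdet hSA E10 E11
    have F00 : (A 1 1 0 - B 1 1 0) * ((M 0 0 * M 1 1 - M 0 1 * M 1 0) * M 0 0)
        + (A 1 0 0 - B 1 0 0) * (-((M 0 0 * M 1 1 - M 0 1 * M 1 0) * M 0 1)) = 0 := by
      linear_combination row1 0 1 0
    have F01 : (A 1 1 0 - B 1 1 0) * ((M 0 0 * M 1 1 - M 0 1 * M 1 0) * M 0 0 + M 0 1)
        + (A 1 0 0 - B 1 0 0) * (-((M 0 0 * M 1 1 - M 0 1 * M 1 0) * M 0 1) + M 0 0) = 0 := by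
      linear_combination row1 1 1 0
    obtain ⟨h110, h100⟩ := two_eqs _ _ _ _ _ hdet hSB F00 F01
    have F10 : (A 1 1 1 - B 1 1 1) * ((M 0 0 * M 1 1 - M 0 1 * M 1 0) * M 0 0)
        + (A 1 0 1 - B 1 0 1) * (-((M 0 0 * M 1 1 - M 0 1 * M 1 0) * M 0 1)) = 0 := by
      linear_combination row1 0 0 1
    have F11 : (A 1 1 1 - B 1 1 1) * ((M 0 0 * M 1 1 - M 0 1 * M 1 0) * M 0 0 + M 0 1)
        + (A 1 0 1 - B 1 0 1) * (-((M 0 0 * M 1 1 - M 0 1 * M 1 0) * M 0 1) + M 0 0) = 0 := by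
      linear_combination row1 1 0 1
    obtain ⟨h111, h101⟩ := two_eqs _ _ _ _ _ hdet hSB F10 F11
    funext i j k
    rcases fin2cases i with rfl | rfl <;> rcases fin2cases j with rfl | rfl <;>
      rcases fin2cases k with rfl | rfl <;> linarith

lemma case_r0 (A B : Tens)
    (hbest : ∀ C : Tens, tensorRank3 C ≤ 2 →
      frobNorm3 (fun i j k => A i j k - B i j k) ≤ frobNorm3 (fun i j k => A i j k - C i j k))
    (u1 v1 w1 u2 v2 w2 : Fin 2 → ℝ)
    (hdec : ∀ i j k, B i j k = u1 i * v1 j * w1 k + u2 i * v2 j * w2 k)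
    (hr : w1 0 * w2 1 - w1 1 * w2 0 = 0) : A = B := by
  by_cases h1 : w1 0 = 0 ∧ w1 1 = 0
  · apply degenerate_case A B hbest (fun i j => u2 i * v2 j) w2
    intro i j k
    have hk : w1 k = 0 := by rcases fin2cases k with rfl | rfl; exacts [h1.1, h1.2]
    rw [hdec i j k, hk]; ring
  · have hs : w1 0 ^ 2 + w1 1 ^ 2 ≠ 0 := by
      intro h0
      apply h1
      constructor <;> nlinarith [sq_nonneg (w1 0), sq_nonneg (w1 1)]
    apply degenerate_case A B hbest
      (fun i j => u1 i * v1 j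
        + ((w2 0 * w1 0 + w2 1 * w1 1) / (w1 0 ^ 2 + w1 1 ^ 2)) * (u2 i * v2 j)) w1
    intro i j k
    have hw2 : w2 k = ((w2 0 * w1 0 + w2 1 * w1 1) / (w1 0 ^ 2 + w1 1 ^ 2)) * w1 k := by
      rcases fin2cases k with rfl | rfl
      · field_simp
        linear_combination (-(w1 1)) * hr
      · field_simp
        linear_combination (w1 0) * hr
    rw [hdec i j k, hw2]; ring

end NoBest


/-- No rank-3 tensor in `ℝ^{2×2×2}` has a best rank-2 approximation: the infimum of
Frobenius distances to rank-≤2 tensors is never attained. -/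
theorem no_best_rank_two_approximation (A : Fin 2 → Fin 2 → Fin 2 → ℝ)
    (hA : tensorRank3 A = 3) :
    ¬ ∃ B : Fin 2 → Fin 2 → Fin 2 → ℝ, tensorRank3 B ≤ 2 ∧
        ∀ C : Fin 2 → Fin 2 → Fin 2 → ℝ, tensorRank3 C ≤ 2 →
          frobNorm3 (fun i j k => A i j k - B i j k) ≤
          frobNorm3 (fun i j k => A i j k - C i j k) := by
  rintro ⟨B, hBr, hbest⟩
  have hAB : A ≠ B := by
    intro h
    rw [← h, hA] at hBr
    omega
  obtain ⟨u1, v1, w1, u2, v2, w2, hdec⟩ := NoBest.decomp_of_rank_le_two B hBr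
  by_cases hr : w1 0 * w2 1 - w1 1 * w2 0 = 0
  · exact hAB (NoBest.case_r0 A B hbest u1 v1 w1 u2 v2 w2 hdec hr)
  by_cases hq : v1 0 * v2 1 - v1 1 * v2 0 = 0
  · apply hAB
    have hsw : (fun i j k => A i k j) = (fun i j k => B i k j) := by
      apply NoBest.case_r0 _ _ ?_ u1 w1 v1 u2 w2 v2 ?_ hq
      · intro C hC
        have hC' : tensorRank3 (fun i j k => C i k j) ≤ 2 := by
          rw [NoBest.rank_swap23]; exact hC
        have h2 := hbest _ hC'
        calc frobNorm3 (fun i j k => (fun i j k => A i k j) i j k - (fun i j k => B i k j) i j k)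
            = frobNorm3 (fun i j k => A i j k - B i j k) :=
              NoBest.frob_swap23 (fun i j k => A i j k - B i j k)
          _ ≤ frobNorm3 (fun i j k => A i j k - (fun i j k => C i k j) i j k) := h2
          _ = frobNorm3 (fun i j k => (fun i j k => A i k j) i j k - C i j k) :=
              (NoBest.frob_swap23 (fun i j k => A i j k - C i k j)).symm
      · intro i j k
        rw [hdec i k j]; ring
    funext i j k
    have := congrFun (congrFun (congrFun hsw i) k) j
    simpa using this
  by_cases hp : u1 0 * u2 1 - u1 1 * u2 0 = 0
  · apply hAB
    have hsw : (fun i j k => A k j i) = (fun i j k => B k j i) := by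
      apply NoBest.case_r0 _ _ ?_ w1 v1 u1 w2 v2 u2 ?_ hp
      · intro C hC
        have hC' : tensorRank3 (fun i j k => C k j i) ≤ 2 := by
          rw [NoBest.rank_swap13]; exact hC
        have h2 := hbest _ hC'
        calc frobNorm3 (fun i j k => (fun i j k => A k j i) i j k - (fun i j k => B k j i) i j k)
            = frobNorm3 (fun i j k => A i j k - B i j k) :=
              NoBest.frob_swap13 (fun i j k => A i j k - B i j k)
          _ ≤ frobNorm3 (fun i j k => A i j k - (fun i j k => C k j i) i j k) := h2
          _ = frobNorm3 (fun i j k => (fun i j k => A k j i) i j k - C i j k) :=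
              (NoBest.frob_swap13 (fun i j k => A i j k - C k j i)).symm
      · intro i j k
        rw [hdec k j i]; ring
    funext i j k
    have := congrFun (congrFun (congrFun hsw k) j) i
    simpa using this
  · have hdisc : NoBest.disc B
        = ((u1 0 * u2 1 - u1 1 * u2 0) * (v1 0 * v2 1 - v1 1 * v2 0)
            * (w1 0 * w2 1 - w1 1 * w2 0)) ^ 2 := by
      simp only [NoBest.disc, hdec]
      ring
    exact NoBest.case_generic A B hbest hAB
      (by rw [hdisc]; exact pow_two_pos_of_ne_zero (mul_ne_zero (mul_ne_zero hp hq) hr))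
end
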